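/- arXiv:2112.06187 — 2 statements merged into one kernel-verified Lean document; each statement's English description precedes it below -/
import Mathlib

section
/- For every n ≥ 1, the 3-adic valuation of a_n satisfies ν_3(a_n) ≤ ν_3(n(n+1)(n+3)(n+8)) + 6. -/
/-!
Let `M` be the companion matrix of `x³ = x² + 1`, so that `M` maps `(aₙ, aₙ₊₁, aₙ₊₂)` to
`(aₙ₊₁, aₙ₊₂, aₙ₊₃)`. One checks `M⁸ = 1 + 3A` (`A = deviation`), and cubing `1 + 3^(k+1) Y`
only perturbs `Y` by a multiple of `3^(k+1)`; hence `M^(8m) ≡ 1 + 3m·A (mod 3^(ν₃ m + 2))`, and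
similarly, from `M²⁴ = 1 + 9(A + 3(A² + A³))`, one level deeper for `M^(24m)`. Since `aₙ` is a
fixed linear form in `(aₙ₊ₛ, aₙ₊ₛ₊₁, aₙ₊ₛ₊₂)`, applying this with `n + s = 8m` (`s = 1, 3`) or
`n + s = 24m` (`s = 0, 8`) pins `ν₃(aₙ)` to `ν₃(n + s)` plus a constant, as soon as the leading
coefficient is prime to `3`. Modulo `3` the sequence has period `8` and vanishes only for
`n ≡ 0, 5, 7 (mod 8)`; the remaining class `n ≡ 8 (mod 24)` is settled by the period `72` modulo
`27`, where `aₙ ≡ 9`.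
-/

def narayana : ℕ → ℕ
  | 0 => 0
  | 1 => 1
  | 2 => 1
  | n + 3 => narayana (n + 2) + narayana n

theorem padicValNat_le_of_modEq {p x m e : ℕ} [hp : Fact p.Prime] {c : ℤ} (hm : m ≠ 0)
    (hc : ¬(p : ℤ) ∣ c) (h : (x : ℤ) ≡ p ^ e * m * c [ZMOD p ^ (padicValNat p m + e + 1)]) :
    padicValNat p x ≤ padicValNat p m + e := by
  by_contra! hlt
  have hx : (p : ℤ) ^ (padicValNat p m + e + 1) ∣ x := by
    exact_mod_cast (padicValNat_dvd_iff _ x).2 (Or.inr hlt)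
  have hpm : p ^ e * m ≠ 0 := mul_ne_zero (pow_ne_zero _ hp.out.ne_zero) hm
  have hc0 : c ≠ 0 := by rintro rfl; simp at hc
  have hy := (padicValInt_dvd_iff (p := p) _ _).1 ((Int.ModEq.dvd h).add hx)
  rw [sub_add_cancel, show (p : ℤ) ^ e * m * c = ((p ^ e * m : ℕ) : ℤ) * c by push_cast; rfl,
    padicValInt.mul (by exact_mod_cast hpm) hc0, padicValInt.of_nat,
    padicValNat.mul (pow_ne_zero _ hp.out.ne_zero) hm, padicValNat.prime_pow,
    padicValInt.eq_zero_of_not_dvd hc] at hy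
  rcases hy with hy | hy
  · exact mul_ne_zero (by exact_mod_cast hpm) hc0 hy
  omega

section Lifting

variable {R : Type*} [Ring R]

theorem one_add_three_pow_smul_pow_three (k : ℕ) (Y : R) :
    (1 + (3 ^ (k + 1) : ℤ) • Y) ^ 3 =
      1 + (3 ^ (k + 2) : ℤ) • (Y + (3 ^ (k + 1) : ℤ) • (Y ^ 2 + (3 ^ k : ℤ) • Y ^ 3)) := by
  simp only [pow_succ, pow_zero, one_mul, add_mul, mul_add, mul_one,
    smul_mul_assoc, mul_smul_comm]
  module

theorem exists_one_add_smul_pow (q : ℤ) (Y : R) (t : ℕ) :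
    ∃ Z : R, (1 + q • Y) ^ t = 1 + (t * q) • Y + q ^ 2 • Z := by
  induction t with
  | zero => exact ⟨0, by simp⟩
  | succ t ih =>
    obtain ⟨Z, hZ⟩ := ih
    refine ⟨Z + (t : ℤ) • Y ^ 2 + q • (Z * Y), ?_⟩
    rw [pow_succ, hZ]
    simp only [add_mul, mul_add, one_mul, mul_one, smul_mul_assoc,
      mul_smul_comm, pow_two]
    push_cast
    module

theorem exists_pow_three_pow_eq {X Y : R} {k : ℕ} (hX : X = 1 + (3 ^ (k + 1) : ℤ) • Y) (j : ℕ) :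
    ∃ C : R, X ^ 3 ^ j = 1 + (3 ^ (k + j + 1) : ℤ) • (Y + (3 ^ (k + 1) : ℤ) • C) := by
  induction j with
  | zero => exact ⟨0, by simpa using hX⟩
  | succ j ih =>
    obtain ⟨C, hC⟩ := ih
    set Y' := Y + (3 ^ (k + 1) : ℤ) • C
    refine ⟨C + (3 ^ j : ℤ) • (Y' ^ 2 + (3 ^ (k + j) : ℤ) • Y' ^ 3), ?_⟩
    rw [pow_succ, pow_mul, hC, one_add_three_pow_smul_pow_three]
    simp only [Y']
    module

theorem exists_pow_eq_one_add {X Y : R} {k : ℕ} (hX : X = 1 + (3 ^ (k + 1) : ℤ) • Y) (m : ℕ) :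
    ∃ C : R,
      X ^ m = 1 + (m * 3 ^ (k + 1) : ℤ) • Y + (3 ^ (padicValNat 3 m + 2 * k + 2) : ℤ) • C := by
  rcases eq_or_ne m 0 with rfl | hm
  · exact ⟨0, by simp⟩
  obtain ⟨j, t, ht, rfl⟩ := Nat.exists_eq_pow_mul_and_not_dvd hm 3 (by norm_num)
  have hval : padicValNat 3 (3 ^ j * t) = j := by
    rw [padicValNat.mul (by positivity) (by rintro rfl; simp at ht), padicValNat.prime_pow,
      padicValNat.eq_zero_of_not_dvd ht, add_zero]
  obtain ⟨C, hC⟩ := exists_pow_three_pow_eq hX j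
  obtain ⟨Z, hZ⟩ := exists_one_add_smul_pow (3 ^ (k + j + 1) : ℤ) (Y + (3 ^ (k + 1) : ℤ) • C) t
  refine ⟨(t : ℤ) • C + (3 ^ j : ℤ) • Z, ?_⟩
  rw [pow_mul, hC, hZ, hval]
  push_cast
  module

end Lifting

namespace Narayana

open Matrix

def companion : Matrix (Fin 3) (Fin 3) ℤ := !![0, 1, 0; 0, 0, 1; 1, 0, 1]

def state (n : ℕ) : Fin 3 → ℤ := ![narayana n, narayana (n + 1), narayana (n + 2)]

def deviation : Matrix (Fin 3) (Fin 3) ℤ := !![1, 1, 2; 2, 1, 3; 3, 2, 4]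

theorem companion_pow_eight : companion ^ 8 = 1 + (3 : ℤ) • deviation := by decide

theorem companion_pow_eight_mul_three : companion ^ (8 * 3 ^ 1) =
    1 + (3 ^ (1 + 1) : ℤ) • (deviation + (3 : ℤ) • (deviation ^ 2 + deviation ^ 3)) := by
  rw [pow_mul, pow_one, companion_pow_eight]
  simpa using one_add_three_pow_smul_pow_three 0 deviation

theorem companion_mulVec_state (n : ℕ) : companion *ᵥ state n = state (n + 1) := by
  ext i
  fin_cases i <;> simp [companion, state, mulVec, dotProduct, Fin.sum_univ_three]
  simp only [narayana]; push_cast; ring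

theorem companion_pow_mulVec_state (k n : ℕ) : companion ^ k *ᵥ state n = state (n + k) := by
  induction k with
  | zero => simp
  | succ k ih => rw [pow_succ', ← mulVec_mulVec, ih, companion_mulVec_state]; rfl

theorem narayana_eq_dotProduct {ρ : Fin 3 → ℤ} {s n k r : ℕ}
    (hρ : ρ ᵥ* companion ^ s = Pi.single 0 1) (h : n + s = r + k) :
    (narayana n : ℤ) = ρ ⬝ᵥ (companion ^ k *ᵥ state r) := by
  rw [companion_pow_mulVec_state, ← h, ← companion_pow_mulVec_state, dotProduct_mulVec, hρ,
    single_dotProduct, one_mul]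
  rfl

theorem narayana_modEq_of_companion_pow_eq {ρ : Fin 3 → ℤ} {s n k r : ℕ} {c d : ℤ}
    {Y C : Matrix (Fin 3) (Fin 3) ℤ} (hρ : ρ ᵥ* companion ^ s = Pi.single 0 1)
    (h : n + s = r + k) (hM : companion ^ k = 1 + c • Y + d • C) :
    (narayana n : ℤ) ≡ ρ ⬝ᵥ state r + c * (ρ ⬝ᵥ (Y *ᵥ state r)) [ZMOD d] := by
  rw [narayana_eq_dotProduct hρ h, hM]
  simp only [add_mulVec, one_mulVec, smul_mulVec, dotProduct_add, dotProduct_smul, smul_eq_mul]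
  exact Int.modEq_add_fac_self

theorem companion_pow_eight_mul_three_pow (j : ℕ) :
    ∃ C, companion ^ (8 * 3 ^ j) = 1 + (3 ^ (j + 1) : ℤ) • C := by
  obtain ⟨C, hC⟩ := exists_pow_three_pow_eq (k := 0) (X := companion ^ 8)
    (by rw [companion_pow_eight, zero_add, pow_one]) j
  exact ⟨_, by rw [pow_mul, hC, zero_add]⟩

theorem narayana_add_modEq {N : ℕ} {q : ℤ} {C : Matrix (Fin 3) (Fin 3) ℤ}
    (hN : companion ^ N = 1 + q • C) (n : ℕ) :
    (narayana (n + N) : ℤ) ≡ narayana n [ZMOD q] := by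
  have h := congrFun (companion_pow_mulVec_state N n) 0
  rw [hN, add_mulVec, one_mulVec, smul_mulVec] at h
  simp only [state, Pi.add_apply, Pi.smul_apply, smul_eq_mul, Matrix.cons_val_zero] at h
  rw [← h]
  exact Int.modEq_add_fac_self

theorem narayana_modEq_mod (j n : ℕ) :
    (narayana n : ℤ) ≡ narayana (n % (8 * 3 ^ j)) [ZMOD 3 ^ (j + 1)] := by
  obtain ⟨C, hC⟩ := companion_pow_eight_mul_three_pow j
  have key (q : ℕ) : (narayana (n % (8 * 3 ^ j) + 8 * 3 ^ j * q) : ℤ) ≡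
      narayana (n % (8 * 3 ^ j)) [ZMOD 3 ^ (j + 1)] := by
    induction q with
    | zero => rfl
    | succ q ih => rw [Nat.mul_succ, ← add_assoc]; exact (narayana_add_modEq hC _).trans ih
  simpa only [Nat.mod_add_div] using key (n / (8 * 3 ^ j))

theorem three_dvd_narayana_iff (n : ℕ) : 3 ∣ narayana n ↔ n % 8 = 0 ∨ n % 8 = 5 ∨ n % 8 = 7 := by
  have h := narayana_modEq_mod 0 n
  rw [pow_zero, mul_one, zero_add, pow_one] at h
  rw [← Int.natCast_dvd_natCast, Nat.cast_ofNat, h.dvd_iff]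
  have : n % 8 < 8 := Nat.mod_lt _ (by norm_num)
  generalize n % 8 = r at *
  interval_cases r <;> decide

theorem narayana_modEq_nine {n : ℕ} (h : n % 24 = 8) : (narayana n : ℤ) ≡ 9 [ZMOD 27] := by
  refine (narayana_modEq_mod 2 n).trans ?_
  have : n % 72 = 8 ∨ n % 72 = 32 ∨ n % 72 = 56 := by omega
  rcases this with h | h | h <;>
    simp only [Nat.reducePow, Nat.reduceMul, Nat.reduceAdd, h] <;> decide

theorem padicValNat_narayana_le_of_dvd {k s n : ℕ} {Y : Matrix (Fin 3) (Fin 3) ℤ}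
    {ρ : Fin 3 → ℤ} {c : ℤ} (hY : companion ^ (8 * 3 ^ k) = 1 + (3 ^ (k + 1) : ℤ) • Y)
    (hρ : ρ ᵥ* companion ^ s = Pi.single 0 1) (h0 : ρ ⬝ᵥ state 0 = 0)
    (hc : ρ ⬝ᵥ (Y *ᵥ state 0) = 3 ^ k * c) (hc3 : ¬3 ∣ c) (hdvd : 8 * 3 ^ k ∣ n + s) :
    padicValNat 3 (narayana n) ≤ padicValNat 3 (n + s) + k + 1 := by
  obtain ⟨m, hm⟩ := hdvd
  rcases eq_or_ne m 0 with rfl | hm0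
  · obtain rfl : n = 0 := by omega
    simp [narayana]
  obtain ⟨C, hC⟩ := exists_pow_eq_one_add hY m
  have key := narayana_modEq_of_companion_pow_eq hρ (r := 0) (by rw [hm, zero_add])
    (by rw [pow_mul, hC])
  rw [h0, hc, zero_add] at key
  have hval : padicValNat 3 (n + s) = padicValNat 3 m + k := by
    rw [hm, padicValNat.mul (by positivity) hm0, padicValNat.mul (by norm_num) (by positivity),
      padicValNat.prime_pow, padicValNat.eq_zero_of_not_dvd (by norm_num)]
    ring
  have := padicValNat_le_of_modEq (p := 3) (e := 2 * k + 1) hm0 (by exact_mod_cast hc3)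
    (key.trans (by ring_nf; rfl))
  omega

theorem padicValNat_narayana_le_of_mod_eight_eq_seven {n : ℕ} (h : n % 8 = 7) :
    padicValNat 3 (narayana n) ≤ padicValNat 3 (n + 1) + 1 :=
  padicValNat_narayana_le_of_dvd (k := 0) (ρ := ![0, -1, 1]) (c := 2)
    (by simpa using companion_pow_eight) (by decide) (by decide) (by decide) (by decide) (by omega)

theorem padicValNat_narayana_le_of_mod_eight_eq_five {n : ℕ} (h : n % 8 = 5) :
    padicValNat 3 (narayana n) ≤ padicValNat 3 (n + 3) + 1 :=
  padicValNat_narayana_le_of_dvd (k := 0) (ρ := ![1, 1, -1]) (c := 1)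
    (by simpa using companion_pow_eight) (by decide) (by decide) (by decide) (by decide) (by omega)

theorem padicValNat_narayana_le_of_mod_twentyFour_eq_zero {n : ℕ} (h : n % 24 = 0) :
    padicValNat 3 (narayana n) ≤ padicValNat 3 n + 2 :=
  padicValNat_narayana_le_of_dvd (s := 0) (ρ := ![1, 0, 0]) (c := 149)
    companion_pow_eight_mul_three (by decide) (by decide) (by decide) (by decide) (by omega)

theorem padicValNat_narayana_le_of_mod_twentyFour_eq_sixteen {n : ℕ} (h : n % 24 = 16) :
    padicValNat 3 (narayana n) ≤ padicValNat 3 (n + 8) + 2 :=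
  padicValNat_narayana_le_of_dvd (ρ := ![-2, -3, 3]) (c := 7)
    companion_pow_eight_mul_three (by decide) (by decide) (by decide) (by decide) (by omega)

theorem padicValNat_narayana_le_of_mod_twentyFour_eq_eight {n : ℕ} (h : n % 24 = 8) :
    padicValNat 3 (narayana n) ≤ 2 := by
  simpa using padicValNat_le_of_modEq (p := 3) (m := 1) (e := 2) (c := 1) one_ne_zero (by decide)
    (by simpa using narayana_modEq_nine h)

theorem exists_dvd_and_padicValNat_narayana_le (n : ℕ) :
    ∃ d, d ∣ n * (n + 1) * (n + 3) * (n + 8) ∧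
      padicValNat 3 (narayana n) ≤ padicValNat 3 d + 2 := by
  by_cases h3 : 3 ∣ narayana n
  · have : n % 24 = 0 ∨ n % 24 = 8 ∨ n % 24 = 16 ∨ n % 8 = 5 ∨ n % 8 = 7 := by
      rw [three_dvd_narayana_iff] at h3; omega
    rcases this with h | h | h | h | h
    · exact ⟨n, ⟨(n + 1) * (n + 3) * (n + 8), by ring⟩,
        padicValNat_narayana_le_of_mod_twentyFour_eq_zero h⟩
    · exact ⟨1, one_dvd _, by simpa using padicValNat_narayana_le_of_mod_twentyFour_eq_eight h⟩
    · exact ⟨n + 8, ⟨n * (n + 1) * (n + 3), by ring⟩,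
        padicValNat_narayana_le_of_mod_twentyFour_eq_sixteen h⟩
    · exact ⟨n + 3, ⟨n * (n + 1) * (n + 8), by ring⟩,
        (padicValNat_narayana_le_of_mod_eight_eq_five h).trans (by omega)⟩
    · exact ⟨n + 1, ⟨n * (n + 3) * (n + 8), by ring⟩,
        (padicValNat_narayana_le_of_mod_eight_eq_seven h).trans (by omega)⟩
  · exact ⟨1, one_dvd _, by simp [padicValNat.eq_zero_of_not_dvd h3]⟩

end Narayana

open Narayana in
theorem narayana_val_bound_general (n : ℕ) :
    padicValNat 3 (narayana n) ≤ padicValNat 3 (n * (n + 1) * (n + 3) * (n + 8)) + 6 := by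
  rcases eq_or_ne n 0 with rfl | hn
  · simp [narayana]
  obtain ⟨d, hd, hle⟩ := exists_dvd_and_padicValNat_narayana_le n
  have := (padicValNat_dvd_iff_le (p := 3) (by positivity)).1 (pow_padicValNat_dvd.trans hd)
  omega

theorem narayana_val_bound (n : ℕ) (hn : 1 ≤ n) :
    padicValNat 3 (narayana n) ≤ padicValNat 3 (n * (n + 1) * (n + 3) * (n + 8)) + 6 :=
  narayana_val_bound_general n
end

section
/- The only solutions in positive integers n and m to the equation a_n = m! are (n,m) ∈ {(1,1), (2,1), (3,1), (4,2), (7,3)}. -/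
open scoped Nat
open Matrix

section Lifting

variable {R : Type*} [Ring R]

theorem exists_one_add_pow_eq (x : R) (q : ℕ) :
    ∃ r, (1 + x) ^ q = 1 + q • x + q.choose 2 • x ^ 2 + x ^ 3 * r := by
  induction q with
  | zero => exact ⟨0, by simp⟩
  | succ q ih =>
    obtain ⟨r, hr⟩ := ih
    refine ⟨q.choose 2 • 1 + r + r * x, ?_⟩
    rw [pow_succ, hr, Nat.choose_succ_succ, Nat.choose_one_right]
    simp only [add_smul, one_smul, mul_add, add_mul, smul_mul_assoc, mul_smul_comm,
      one_mul, mul_one, ← pow_succ, mul_assoc, ← sq]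
    abel

theorem exists_one_add_smul_pow_pow_eq {p : ℕ} (hp : Odd p) (B : R) (j : ℕ) :
    ∃ D, (1 + p • B) ^ p ^ j = 1 + p ^ (j + 1) • (B + p • D) := by
  induction j with
  | zero => exact ⟨0, by simp⟩
  | succ j ih =>
    obtain ⟨D, hD⟩ := ih
    set M := B + p • D
    obtain ⟨r, hr⟩ := exists_one_add_pow_eq (p ^ (j + 1) • M) p
    obtain ⟨t, ht⟩ := hp
    have hchoose : p.choose 2 = p * t := by
      rw [Nat.choose_two_right, ht, Nat.add_sub_cancel]
      exact Nat.div_eq_of_eq_mul_left two_pos (by ring)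
    refine ⟨D + (t * p ^ j) • M ^ 2 + p ^ (2 * j) • (M ^ 3 * r), ?_⟩
    rw [pow_succ, pow_mul, hD, hr, hchoose, smul_pow, smul_pow, smul_mul_assoc]
    module

theorem prime_dvd_of_pow_dvd_map_one_add_smul_pow {p : ℕ} (hp : p.Prime) (hodd : Odd p)
    (f : R →+ ℤ) (hf : f 1 = 0) {B : R} (hB : ¬ (p : ℤ) ∣ f B) {j q : ℕ}
    (h : (p : ℤ) ^ (j + 2) ∣ f ((1 + p • B) ^ (p ^ j * q))) : p ∣ q := by
  obtain ⟨D, hD⟩ := exists_one_add_smul_pow_pow_eq hodd B j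
  have hM : f (B + p • D) = f B + p * f D := by rw [map_add, map_nsmul, nsmul_eq_mul]
  generalize B + p • D = M at hD hM
  obtain ⟨r, hr⟩ := exists_one_add_pow_eq (p ^ (j + 1) • M) q
  rw [pow_mul, hD, hr, smul_pow, smul_pow, smul_mul_assoc] at h
  simp only [map_add, map_nsmul, hf, hM, zero_add] at h
  simp only [nsmul_eq_mul, Nat.cast_pow] at h
  have key : (p : ℤ) ^ (j + 1) * p ∣ p ^ (j + 1) * (q * (f B + p * f D) +
      p * (p ^ j * (q.choose 2 * f (M ^ 2) + p ^ (j + 1) * f (M ^ 3 * r)))) := by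
    convert h using 1 <;> ring
  rw [mul_dvd_mul_iff_left (pow_ne_zero _ (Nat.cast_ne_zero.mpr hp.ne_zero)),
    dvd_add_left (dvd_mul_right _ _)] at key
  rcases (Nat.prime_iff_prime_int.mp hp).dvd_mul.mp key with hq | hq
  · exact Int.natCast_dvd_natCast.mp hq
  · exact absurd ((dvd_add_left (dvd_mul_right _ _)).mp hq) hB

end Lifting

theorem pow_dvd_factorial_mul {p : ℕ} (hp : 0 < p) (k : ℕ) : p ^ k ∣ (p * k)! := by
  induction k with
  | zero => simp
  | succ k ih =>
    have hk : p * (k + 1) = p * k + (p - 1) + 1 := by rw [mul_add_one]; omega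
    rw [hk, Nat.factorial_succ, pow_succ', ← hk]
    exact mul_dvd_mul (dvd_mul_right p (k + 1)) (ih.trans (Nat.factorial_dvd_factorial (by omega)))

theorem factorial_lt_two_pow_mul_self {m : ℕ} (hm : 0 < m) : m ! < 2 ^ (m * m) :=
  calc m ! ≤ m ^ m := Nat.factorial_le_pow m
    _ < (2 ^ m) ^ m := Nat.pow_lt_pow_left Nat.lt_two_pow_self hm.ne'
    _ = 2 ^ (m * m) := (pow_mul 2 m m).symm

theorem narayana_add_three (n : ℕ) : narayana (n + 3) = narayana (n + 2) + narayana n := rfl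

theorem narayana_le_succ : ∀ n, narayana n ≤ narayana (n + 1)
  | 0 | 1 => by decide
  | _ + 2 => Nat.le_add_right _ _

theorem monotone_narayana : Monotone narayana := monotone_nat_of_le_succ narayana_le_succ

theorem two_mul_narayana_le : ∀ n, 2 * narayana (n + 2) ≤ narayana (n + 4)
  | 0 => by decide
  | n + 1 => by
    show 2 * narayana (n + 3) ≤ narayana (n + 5)
    have h5 : narayana (n + 5) = narayana (n + 4) + narayana (n + 2) := rfl
    have h4 : narayana (n + 4) = narayana (n + 3) + narayana (n + 1) := rfl
    have h3 : narayana (n + 3) = narayana (n + 2) + narayana n := rfl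
    have := narayana_le_succ n
    omega

theorem two_pow_le_narayana (k : ℕ) : 2 ^ k ≤ narayana (2 * k + 2) := by
  induction k with
  | zero => decide
  | succ k ih =>
    calc 2 ^ (k + 1) = 2 * 2 ^ k := pow_succ' 2 k
      _ ≤ 2 * narayana (2 * k + 2) := by omega
      _ ≤ narayana (2 * (k + 1) + 2) := two_mul_narayana_le _

theorem lt_of_narayana_lt_two_pow {n k : ℕ} (h : narayana n < 2 ^ k) : n < 2 * k + 2 := by
  by_contra! hn
  exact h.not_ge ((two_pow_le_narayana k).trans (monotone_narayana hn))

theorem narayana_add_46_modEq (n : ℕ) : narayana (n + 46) ≡ narayana n [MOD 47] := by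
  induction n using Nat.strong_induction_on with
  | _ n ih =>
    match n with
    | 0 | 1 | 2 => decide
    | n + 3 => exact (ih (n + 2) (by omega)).add (ih n (by omega))

theorem narayana_modEq_mod_46 (n : ℕ) : narayana n ≡ narayana (n % 46) [MOD 47] := by
  induction n using Nat.strong_induction_on with
  | _ n ih =>
    rcases lt_or_ge n 46 with hn | hn
    · rw [Nat.mod_eq_of_lt hn]
    · obtain ⟨k, rfl⟩ := Nat.exists_eq_add_of_le' hn
      rw [Nat.add_mod_right]
      exact (narayana_add_46_modEq k).trans (ih k (by omega))

theorem mod_46_mem_of_dvd_narayana {n : ℕ} (h : 47 ∣ narayana n) :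
    n % 46 ∈ ({0, 38, 43, 45} : Finset ℕ) := by
  have key : ∀ r < 46, 47 ∣ narayana r → r ∈ ({0, 38, 43, 45} : Finset ℕ) := by decide
  exact key _ (Nat.mod_lt _ (by norm_num)) (((narayana_modEq_mod_46 n).dvd_iff dvd_rfl).mp h)

def narayanaMatrix : Matrix (Fin 3) (Fin 3) ℤ := !![0, 1, 0; 0, 0, 1; 1, 0, 1]

theorem narayanaMatrix_mulVec (x y z : ℤ) : narayanaMatrix *ᵥ ![x, y, z] = ![y, z, x + z] := by
  ext i; fin_cases i <;> simp [narayanaMatrix, mulVec, dotProduct, Fin.sum_univ_three]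

theorem narayanaMatrix_pow_mulVec (n : ℕ) :
    narayanaMatrix ^ n *ᵥ ![0, 1, 1] =
      ![(narayana n : ℤ), narayana (n + 1), narayana (n + 2)] := by
  induction n with
  | zero => simp [narayana]
  | succ n ih =>
    rw [pow_succ', ← mulVec_mulVec, ih, narayanaMatrix_mulVec, narayana_add_three, Nat.cast_add,
      add_comm (narayana n : ℤ)]

theorem narayanaMatrix_pow_add_three (n : ℕ) : narayanaMatrix ^ (n + 3) =
    !![(narayana (n + 1) : ℤ), narayana n, narayana (n + 2);
      narayana (n + 2), narayana (n + 1), narayana (n + 3);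
      narayana (n + 3), narayana (n + 2), narayana (n + 4)] := by
  induction n with
  | zero => decide
  | succ n ih =>
    rw [pow_succ', ih, narayanaMatrix, mul_fin_three]
    simp [narayana_add_three, add_assoc, add_comm, add_left_comm]

theorem exists_narayanaMatrix_pow_46_eq : ∃ B, narayanaMatrix ^ 46 = 1 + 47 • B := by
  have h : ∀ i j,
      (47 : ℤ) ∣ (narayanaMatrix ^ 46) i j - (1 : Matrix (Fin 3) (Fin 3) ℤ) i j := by
    rw [narayanaMatrix_pow_add_three 43]
    decide
  refine ⟨.of fun i j =>
    ((narayanaMatrix ^ 46) i j - (1 : Matrix (Fin 3) (Fin 3) ℤ) i j) / 47, ?_⟩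
  ext i j
  simp [Int.mul_ediv_cancel' (h i j)]

theorem dvd_of_pow_dvd_narayana {i j q n : ℕ} {u : Fin 3 → ℤ}
    (hu : narayanaMatrix ^ i *ᵥ u = ![0, 1, 1]) (hu0 : u 0 = 0) (hi : i ≤ 46)
    (hsq : ¬ 47 ^ 2 ∣ narayana (46 - i)) (hq : n + i = 46 * 47 ^ j * q)
    (h : 47 ^ (j + 2) ∣ narayana n) : 47 ∣ q := by
  obtain ⟨B, hB⟩ := exists_narayanaMatrix_pow_46_eq
  let f : Matrix (Fin 3) (Fin 3) ℤ →+ ℤ :=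
    (Pi.evalAddMonoidHom (fun _ => ℤ) 0).comp (mulVec.addMonoidHomLeft u)
  have hf (k : ℕ) : f (narayanaMatrix ^ (k + i)) = narayana k := by
    simp [f, mulVec.addMonoidHomLeft, pow_add, ← mulVec_mulVec, hu, narayanaMatrix_pow_mulVec]
  have hf1 : f 1 = 0 := by simpa [f, mulVec.addMonoidHomLeft] using hu0
  have hfB : 47 * f B = narayana (46 - i) := by
    rw [← hf, Nat.sub_add_cancel hi, hB, map_add, hf1, map_nsmul, zero_add, nsmul_eq_mul]
    rfl
  refine prime_dvd_of_pow_dvd_map_one_add_smul_pow (by norm_num) (by decide) f hf1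
    (B := B) (j := j) ?_ ?_
  · rintro ⟨c, hc⟩
    exact hsq (Int.natCast_dvd_natCast.mp ⟨c, by rw [← hfB, hc]; ring⟩)
  · rw [← hB, ← pow_mul, ← mul_assoc, ← hq, hf]
    exact_mod_cast h

theorem exists_dvd_add_of_pow_dvd_narayana (j : ℕ) {n : ℕ} (h : 47 ^ (j + 1) ∣ narayana n) :
    ∃ i ∈ ({0, 1, 3, 8} : Finset ℕ), 46 * 47 ^ j ∣ n + i := by
  induction j with
  | zero =>
    have hn := mod_46_mem_of_dvd_narayana (by simpa using h)
    simp only [Finset.mem_insert, Finset.mem_singleton] at hn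
    rcases hn with hn | hn | hn | hn
    exacts [⟨0, by simp, by omega⟩, ⟨8, by simp, by omega⟩, ⟨3, by simp, by omega⟩,
      ⟨1, by simp, by omega⟩]
  | succ j ih =>
    obtain ⟨i, hi, q, hq⟩ := ih ((pow_dvd_pow 47 (by omega)).trans h)
    refine ⟨i, hi, ?_⟩
    suffices 47 ∣ q by
      obtain ⟨q, rfl⟩ := this
      exact ⟨q, by rw [hq]; ring⟩
    simp only [Finset.mem_insert, Finset.mem_singleton] at hi
    -- `(0, 1, 1)`, `(0, 0, 1)`, `(0, 1, 0)`, `(0, -2, 1)` are the states `(aₖ, aₖ₊₁, aₖ₊₂)` of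
    -- the Narayana sequence run backwards to its zeros `k = 0, -1, -3, -8`.
    rcases hi with rfl | rfl | rfl | rfl
    · exact dvd_of_pow_dvd_narayana (u := ![0, 1, 1]) (by simp) rfl (by norm_num) (by decide) hq h
    · exact dvd_of_pow_dvd_narayana (u := ![0, 0, 1]) (by simp [narayanaMatrix_mulVec]) rfl
        (by norm_num) (by decide) hq h
    · exact dvd_of_pow_dvd_narayana (u := ![0, 1, 0])
        (by simp [pow_succ, ← mulVec_mulVec, narayanaMatrix_mulVec]) rfl
        (by norm_num) (by decide) hq h
    · exact dvd_of_pow_dvd_narayana (u := ![0, -2, 1])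
        (by simp [pow_succ, ← mulVec_mulVec, narayanaMatrix_mulVec]) rfl
        (by norm_num) (by decide) hq h

-- `47 * j + 187 = 47 * (j + 3) + 46` bounds `m` when `m / 47 = j + 3`.
theorem two_mul_sq_add_ten_lt (j : ℕ) : 2 * (47 * j + 187) ^ 2 + 10 < 46 * 47 ^ (j + 2) := by
  induction j with
  | zero => norm_num
  | succ j ih =>
    have h : 47 * (j + 1) + 187 ≤ 2 * (47 * j + 187) := by omega
    calc 2 * (47 * (j + 1) + 187) ^ 2 + 10 ≤ 2 * (2 * (47 * j + 187)) ^ 2 + 10 := by gcongr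
      _ < 47 * (46 * 47 ^ (j + 2)) := by nlinarith
      _ = 46 * 47 ^ (j + 1 + 2) := by ring

theorem narayana_ne_factorial_of_141_le {m : ℕ} (hm : 141 ≤ m) (n : ℕ) :
    narayana n ≠ m ! := by
  intro h
  obtain ⟨j, hj⟩ : ∃ j, m / 47 = j + 3 := ⟨m / 47 - 3, by omega⟩
  have hdvd : 47 ^ (j + 3) ∣ narayana n := h ▸ hj ▸ (pow_dvd_factorial_mul (by norm_num) _).trans
    (Nat.factorial_dvd_factorial (Nat.mul_div_le m 47))
  obtain ⟨i, hi, hdvd⟩ := exists_dvd_add_of_pow_dvd_narayana (j + 2) hdvd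
  have hn0 : n ≠ 0 := by
    rintro rfl
    exact Nat.factorial_ne_zero m h.symm
  have hle : 46 * 47 ^ (j + 2) ≤ n + 8 := by
    simp only [Finset.mem_insert, Finset.mem_singleton] at hi
    exact (Nat.le_of_dvd (by omega) hdvd).trans (by omega)
  have hn : n < 2 * (m * m) + 2 :=
    lt_of_narayana_lt_two_pow (h ▸ factorial_lt_two_pow_mul_self (by omega))
  have hm' : m * m ≤ (47 * j + 187) ^ 2 := by
    rw [sq]
    exact Nat.mul_le_mul (by omega) (by omega)
  have := two_mul_sq_add_ten_lt j
  omega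

def narayanaGraph : ℕ → ℕ → ℕ × ℕ × ℕ → List (ℕ × ℕ)
  | 0, _, _ => []
  | k + 1, i, (a, b, c) => (i, a) :: narayanaGraph k (i + 1) (b, c, a + c)

theorem narayanaGraph_eq (k i : ℕ) :
    narayanaGraph k i (narayana i, narayana (i + 1), narayana (i + 2)) =
      (List.range' i k).map fun n => (n, narayana n) := by
  induction k generalizing i with
  | zero => rfl
  | succ k ih =>
    rw [narayanaGraph, add_comm (narayana i), ← narayana_add_three, ih, List.range'_succ,
      List.map_cons]

theorem narayana_eq_factorial_of_lt {n m : ℕ} (hn : n < 1608) (hm : 0 < m) (hm' : m ≤ 140)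
    (h : narayana n = m !) : (n, m) ∈ [(1, 1), (2, 1), (3, 1), (4, 2), (7, 3)] := by
  have key : ((narayanaGraph 1608 0 (0, 1, 1)).all fun p => (List.range' 1 140).all fun m =>
      p.2 != m ! || (p.1, m) ∈ [(1, 1), (2, 1), (3, 1), (4, 2), (7, 3)]) = true := by
    decide +kernel
  rw [show ((0, 1, 1) : ℕ × ℕ × ℕ) = (narayana 0, narayana 1, narayana 2) from rfl,
    narayanaGraph_eq] at key
  simp only [List.all_eq_true] at key
  have := key (n, narayana n)
    (List.mem_map.mpr ⟨n, List.mem_range'_1.mpr ⟨by omega, hn⟩, rfl⟩) m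
    (List.mem_range'_1.mpr ⟨hm, by omega⟩)
  simpa [h] using this

theorem narayana_factorial_general (n m : ℕ) (hm : 0 < m) :
    narayana n = Nat.factorial m ↔
      (n, m) = (1, 1) ∨ (n, m) = (2, 1) ∨ (n, m) = (3, 1) ∨ (n, m) = (4, 2) ∨ (n, m) = (7, 3) := by
  constructor
  · intro h
    have hm' : m ≤ 140 := by
      by_contra! hm'
      exact narayana_ne_factorial_of_141_le hm' n h
    have hn : n < 1608 := lt_of_narayana_lt_two_pow (k := 803)
      (h ▸ (Nat.factorial_le hm').trans_lt (by decide +kernel))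
    simpa using narayana_eq_factorial_of_lt hn hm hm' h
  · rintro (h | h | h | h | h) <;> obtain ⟨rfl, rfl⟩ := Prod.mk.inj h <;> decide

theorem narayana_factorial (n m : ℕ) (hn : 0 < n) (hm : 0 < m) :
    narayana n = Nat.factorial m ↔
      (n, m) = (1, 1) ∨ (n, m) = (2, 1) ∨ (n, m) = (3, 1) ∨ (n, m) = (4, 2) ∨ (n, m) = (7, 3) :=
  narayana_factorial_general n m hm
end
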